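/- Let α > 0, c ∈ ℝⁿ, γ > 0, μ > 0, and for x ∈ ℝⁿ let φ(x, μ, γ) be the unique minimizer over u ∈ ℝⁿ of (1/2)‖x − u‖² + γμ B(u), where B(u) = −ln(α − ‖u − c‖²) if ‖u − c‖² < α and +∞ otherwise. Define M(x, μ, γ) = Iₙ − 2 (x − φ(x, μ, γ)) (φ(x, μ, γ) − c)ᵀ / (α − 3‖φ(x, μ, γ) − c‖² + 2γμ + 2 (φ(x, μ, γ) − c)ᵀ(x − c)). Then x′ ↦ φ(x′, μ, γ) is differentiable at every x ∈ ℝⁿ and its Jacobian matrix equals ((α − ‖φ(x, μ, γ) − c‖²)/(α − ‖φ(x, μ, γ) − c‖² + 2γμ)) M(x, μ, γ). -/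

import Mathlib

open scoped InnerProductSpace

/-- Logarithmic barrier of the Euclidean ball `{u : ‖u - c‖² ≤ α}`. -/
noncomputable def ballBarrier {n : ℕ} (α : ℝ) (c u : EuclideanSpace ℝ (Fin n)) : EReal :=
  if ‖u - c‖ ^ 2 < α then ((- Real.log (α - ‖u - c‖ ^ 2) : ℝ) : EReal) else ⊤

/-- The objective `u ↦ (1/2)‖x-u‖² + γμ B(u)` defining `prox_{γμB}(x)`. -/
noncomputable def ballProxObj {n : ℕ} (α : ℝ) (c : EuclideanSpace ℝ (Fin n)) (γ μ : ℝ)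
    (x u : EuclideanSpace ℝ (Fin n)) : EReal :=
  ((1 / 2 * ‖x - u‖ ^ 2 : ℝ) : EReal) + ((γ * μ : ℝ) : EReal) * ballBarrier α c u

/-!
At the minimiser `p = φ x` the first-order condition reads `ψ p = x`, where
`ψ u = u + 2γμ (α - ‖u - c‖²)⁻¹ (u - c)` (`ballProxInv`) is the gradient of `½‖u‖² + γμ B(u)`.
Since `ψ u - c` is a multiple of `u - c` whose length is strictly increasing in `‖u - c‖`, `ψ` is
injective on the ball, so `φ` is a left inverse of `ψ` there. The derivative
`Dψ(p) = a I + b (p - c)(p - c)ᵀ` is inverted by the Sherman–Morrison formula, and the inverse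
function theorem gives `Dφ(x) = Dψ(p)⁻¹`; substituting `x - p = 2γμ (α - ‖p - c‖²)⁻¹ (p - c)`
turns it into the claimed matrix.
-/

namespace ContinuousLinearMap

variable {E : Type*} [NormedAddCommGroup E] [InnerProductSpace ℝ E] {a b : ℝ}

noncomputable def rankOneUpdate (a b : ℝ) (p : E) : E →L[ℝ] E :=
  a • ContinuousLinearMap.id ℝ E + b • (innerSL ℝ p).smulRight p

theorem rankOneUpdate_apply (a b : ℝ) (p y : E) :
    rankOneUpdate a b p y = a • y + (b * ⟪p, y⟫_ℝ) • p := by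
  simp [rankOneUpdate, smul_smul]

theorem rankOneUpdate_one_zero (p : E) : rankOneUpdate 1 0 p = ContinuousLinearMap.id ℝ E := by
  simp [rankOneUpdate]

theorem rankOneUpdate_comp (a b a' b' : ℝ) (p : E) :
    (rankOneUpdate a b p).comp (rankOneUpdate a' b' p) =
      rankOneUpdate (a * a') (a * b' + b * a' + b * b' * ‖p‖ ^ 2) p := by
  ext y
  simp only [comp_apply, rankOneUpdate_apply, inner_add_right, real_inner_smul_right,
    real_inner_self_eq_norm_sq]
  match_scalars <;> ring

theorem rankOneUpdate_inv_comp (p : E) (ha : a ≠ 0) (hab : a + b * ‖p‖ ^ 2 ≠ 0) :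
    (rankOneUpdate a⁻¹ (-b / (a * (a + b * ‖p‖ ^ 2))) p).comp (rankOneUpdate a b p) =
      ContinuousLinearMap.id ℝ E := by
  rw [rankOneUpdate_comp, ← rankOneUpdate_one_zero p]
  congr 1
  · field_simp
  · field_simp
    ring

theorem rankOneUpdate_comp_inv (p : E) (ha : a ≠ 0) (hab : a + b * ‖p‖ ^ 2 ≠ 0) :
    (rankOneUpdate a b p).comp (rankOneUpdate a⁻¹ (-b / (a * (a + b * ‖p‖ ^ 2))) p) =
      ContinuousLinearMap.id ℝ E := by
  rw [rankOneUpdate_comp, ← rankOneUpdate_one_zero p]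
  congr 1
  · field_simp
  · field_simp
    ring

/-- The Sherman–Morrison formula. -/
noncomputable def rankOneUpdateEquiv (p : E) (ha : a ≠ 0) (hab : a + b * ‖p‖ ^ 2 ≠ 0) :
    E ≃L[ℝ] E :=
  .equivOfInverse' _ _ (rankOneUpdate_comp_inv p ha hab) (rankOneUpdate_inv_comp p ha hab)

theorem coe_rankOneUpdateEquiv (p : E) (ha : a ≠ 0) (hab : a + b * ‖p‖ ^ 2 ≠ 0) :
    (rankOneUpdateEquiv p ha hab : E →L[ℝ] E) = rankOneUpdate a b p :=
  rfl

theorem coe_rankOneUpdateEquiv_symm (p : E) (ha : a ≠ 0) (hab : a + b * ‖p‖ ^ 2 ≠ 0) :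
    ((rankOneUpdateEquiv p ha hab).symm : E →L[ℝ] E) =
      rankOneUpdate a⁻¹ (-b / (a * (a + b * ‖p‖ ^ 2))) p :=
  rfl

end ContinuousLinearMap

open ContinuousLinearMap

theorem hasStrictDerivAt_const_div_const_sub (s α r : ℝ) (hr : α - r ≠ 0) :
    HasStrictDerivAt (fun r => s / (α - r)) (s / (α - r) ^ 2) r := by
  refine ((hasStrictDerivAt_const r s).div ((hasStrictDerivAt_const r α).sub
    (hasStrictDerivAt_id r)) hr).congr_deriv ?_
  simp

theorem isOpen_setOf_norm_sub_sq_lt {E : Type*} [SeminormedAddCommGroup E] (α : ℝ) (c : E) :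
    IsOpen {u : E | ‖u - c‖ ^ 2 < α} :=
  isOpen_lt (by fun_prop) continuous_const

section BallProx

variable {E : Type*} [NormedAddCommGroup E] [InnerProductSpace ℝ E] {α t : ℝ} {c p x : E}

noncomputable def ballProxInv (α t : ℝ) (c u : E) : E :=
  u + (2 * t / (α - ‖u - c‖ ^ 2)) • (u - c)

theorem ballProxInv_sub_center (α t : ℝ) (c u : E) :
    ballProxInv α t c u - c = (1 + 2 * t / (α - ‖u - c‖ ^ 2)) • (u - c) := by
  rw [ballProxInv, add_smul, one_smul]
  abel

theorem ballProxInv_sub_self (α t : ℝ) (c u : E) :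
    ballProxInv α t c u - u = (2 * t / (α - ‖u - c‖ ^ 2)) • (u - c) := by
  rw [ballProxInv, add_sub_cancel_left]

theorem strictMonoOn_ballProxInv_radial (ht : 0 ≤ t) :
    StrictMonoOn (fun r : ℝ => (1 + 2 * t / (α - r ^ 2)) * r) {r | 0 ≤ r ∧ r ^ 2 < α} := by
  rintro r ⟨hr, -⟩ s ⟨-, hs⟩ hrs
  have hcoef : 2 * t / (α - r ^ 2) ≤ 2 * t / (α - s ^ 2) :=
    div_le_div_of_nonneg_left (by positivity) (by linarith) (by nlinarith)
  exact mul_lt_mul' (by linarith) hrs hr (by positivity)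

theorem ballProxInv_injOn (ht : 0 ≤ t) :
    Set.InjOn (ballProxInv α t c) {u | ‖u - c‖ ^ 2 < α} := by
  intro u hu v hv huv
  have hsub := congrArg (· - c) huv
  simp only [ballProxInv_sub_center] at hsub
  have hcoef : ∀ w : E, ‖w - c‖ ^ 2 < α → 0 < 1 + 2 * t / (α - ‖w - c‖ ^ 2) := fun w hw => by
    have : 0 < α - ‖w - c‖ ^ 2 := sub_pos.2 hw
    positivity
  have hnorm : ‖u - c‖ = ‖v - c‖ := by
    refine (strictMonoOn_ballProxInv_radial ht).injOn ⟨norm_nonneg _, hu⟩ ⟨norm_nonneg _, hv⟩ ?_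
    simpa [norm_smul, abs_of_pos (hcoef u hu), abs_of_pos (hcoef v hv)] using congrArg norm hsub
  rw [hnorm] at hsub
  simpa using smul_right_injective E (hcoef v hv).ne' hsub

noncomputable def ballProxInvDerivEquiv (ht : 0 ≤ t) (hp : ‖p - c‖ ^ 2 < α) : E ≃L[ℝ] E :=
  have hd : 0 < α - ‖p - c‖ ^ 2 := sub_pos.2 hp
  rankOneUpdateEquiv (a := 1 + 2 * t / (α - ‖p - c‖ ^ 2)) (b := 4 * t / (α - ‖p - c‖ ^ 2) ^ 2)
    (p - c) (by positivity) (by positivity)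

theorem hasStrictFDerivAt_ballProxInv (ht : 0 ≤ t) (hp : ‖p - c‖ ^ 2 < α) :
    HasStrictFDerivAt (ballProxInv α t c) (ballProxInvDerivEquiv ht hp : E →L[ℝ] E) p := by
  have hsub := (hasStrictFDerivAt_id (𝕜 := ℝ) p).sub_const c
  have hnorm := (hasStrictFDerivAt_norm_sq (p - c)).comp p hsub
  have hcoef := (hasStrictDerivAt_const_div_const_sub (2 * t) α _ (sub_pos.2 hp).ne'
    ).comp_hasStrictFDerivAt p hnorm
  refine ((hasStrictFDerivAt_id p).add (hcoef.smul hsub)).congr_fderiv ?_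
  ext y
  simp only [ballProxInvDerivEquiv, coe_rankOneUpdateEquiv, rankOneUpdate_apply, id_eq,
    Function.comp_apply, comp_id, add_apply, id_apply, smul_apply, smulRight_apply,
    coe_innerSL_apply, nsmul_eq_mul, Nat.cast_ofNat, smul_eq_mul, inner_sub_left]
  match_scalars <;> ring

theorem coe_ballProxInvDerivEquiv_symm (ht : 0 ≤ t) (hp : ‖p - c‖ ^ 2 < α)
    (hx : ballProxInv α t c p = x) :
    ((ballProxInvDerivEquiv ht hp).symm : E →L[ℝ] E) =
      ((α - ‖p - c‖ ^ 2) / (α - ‖p - c‖ ^ 2 + 2 * t)) •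
        (ContinuousLinearMap.id ℝ E -
          (2 / (α - 3 * ‖p - c‖ ^ 2 + 2 * t + 2 * ⟪p - c, x - c⟫_ℝ)) •
            (innerSL ℝ (p - c)).smulRight (x - p)) := by
  subst hx
  have hd : 0 < α - ‖p - c‖ ^ 2 := sub_pos.2 hp
  rw [ballProxInvDerivEquiv, coe_rankOneUpdateEquiv_symm, ballProxInv_sub_center,
    ballProxInv_sub_self]
  ext y
  simp only [rankOneUpdate_apply, smul_apply, sub_apply, id_apply, smulRight_apply,
    innerSL_apply_apply, real_inner_smul_right, real_inner_self_eq_norm_sq]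
  generalize p - c = q at *
  have hr : 0 ≤ ‖q‖ ^ 2 := by positivity
  generalize ‖q‖ ^ 2 = r at *
  have hden : α - 3 * r + 2 * t + 2 * ((1 + 2 * t / (α - r)) * r) =
      ((α - r) * (α - r + 2 * t) + 4 * t * r) / (α - r) := by
    field_simp
    ring
  have hD : 0 < (α - r) * (α - r + 2 * t) + 4 * t * r := by positivity
  rw [hden]
  match_scalars
  · field_simp
  · field_simp
    ring

noncomputable def ballProxObjReal (α t : ℝ) (c x u : E) : ℝ :=
  1 / 2 * ‖x - u‖ ^ 2 - t * Real.log (α - ‖u - c‖ ^ 2)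

theorem hasFDerivAt_ballProxObjReal (hp : α - ‖p - c‖ ^ 2 ≠ 0) :
    HasFDerivAt (ballProxObjReal α t c x) (innerSL ℝ (ballProxInv α t c p - x)) p := by
  have hdist := ((hasFDerivAt_const x p).sub (hasFDerivAt_id p)).norm_sq
  have hgap := (hasFDerivAt_const α p).sub ((hasFDerivAt_id (𝕜 := ℝ) p).sub_const c).norm_sq
  refine ((hdist.const_mul (1 / 2)).sub ((hgap.log hp).const_mul t)).congr_fderiv ?_
  ext y
  simp only [ballProxInv, one_div, Pi.sub_apply, id_eq, map_sub, zero_sub, comp_neg, comp_id,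
    neg_sub, smul_neg, sub_neg_eq_add, add_apply, smul_apply, sub_apply, coe_innerSL_apply,
    nsmul_eq_mul, Nat.cast_ofNat, smul_eq_mul, inner_add_left, inner_sub_left, real_inner_smul_left]
  field_simp
  ring

theorem ballProxInv_eq_of_isLocalMin (hp : α - ‖p - c‖ ^ 2 ≠ 0)
    (hmin : IsLocalMin (ballProxObjReal α t c x) p) : ballProxInv α t c p = x := by
  have h := DFunLike.congr_fun (hmin.hasFDerivAt_eq_zero (hasFDerivAt_ballProxObjReal hp))
    (ballProxInv α t c p - x)
  rwa [innerSL_apply_apply, zero_apply, inner_self_eq_zero, sub_eq_zero] at h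

end BallProx

section EuclideanBallProx

variable {n : ℕ} {α γ μ : ℝ} {c x p : EuclideanSpace ℝ (Fin n)}

def IsBallProx (α : ℝ) (c : EuclideanSpace ℝ (Fin n)) (γ μ : ℝ)
    (x p : EuclideanSpace ℝ (Fin n)) : Prop :=
  ∀ u, u ≠ p → ballProxObj α c γ μ x p < ballProxObj α c γ μ x u

theorem ballProxObj_eq_top (hγμ : 0 < γ * μ) (hp : ¬ ‖p - c‖ ^ 2 < α) :
    ballProxObj α c γ μ x p = ⊤ := by
  rw [ballProxObj, ballBarrier, if_neg hp, EReal.coe_mul_top_of_pos hγμ, EReal.coe_add_top]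

theorem ballProxObj_eq_coe (hp : ‖p - c‖ ^ 2 < α) :
    ballProxObj α c γ μ x p = ballProxObjReal α (γ * μ) c x p := by
  rw [ballProxObj, ballBarrier, if_pos hp, ballProxObjReal, ← EReal.coe_mul, ← EReal.coe_add]
  congr 1
  ring

theorem IsBallProx.norm_sub_sq_lt (hα : 0 < α) (hγμ : 0 < γ * μ)
    (hmin : IsBallProx α c γ μ x p) : ‖p - c‖ ^ 2 < α := by
  by_contra hp
  have hc : c ≠ p := by
    rintro rfl
    simp [hα] at hp
  simpa [ballProxObj_eq_top hγμ hp] using hmin c hc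

theorem IsBallProx.ballProxInv_eq (hα : 0 < α) (hγμ : 0 < γ * μ)
    (hmin : IsBallProx α c γ μ x p) : ballProxInv α (γ * μ) c p = x := by
  have hp := hmin.norm_sub_sq_lt hα hγμ
  refine ballProxInv_eq_of_isLocalMin (sub_pos.2 hp).ne' ?_
  filter_upwards [(isOpen_setOf_norm_sub_sq_lt α c).mem_nhds hp] with u hu
  rcases eq_or_ne u p with rfl | hup
  · rfl
  · have := (hmin u hup).le
    rwa [ballProxObj_eq_coe hp, ballProxObj_eq_coe hu, EReal.coe_le_coe_iff] at this

end EuclideanBallProx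

theorem ball_prox_jacobian {n : ℕ} (α : ℝ) (hα : 0 < α) (c : EuclideanSpace ℝ (Fin n))
    (γ μ : ℝ) (hγ : 0 < γ) (hμ : 0 < μ)
    (φ : EuclideanSpace ℝ (Fin n) → EuclideanSpace ℝ (Fin n))
    (hφ : ∀ x u : EuclideanSpace ℝ (Fin n), u ≠ φ x →
      ballProxObj α c γ μ x (φ x) < ballProxObj α c γ μ x u) :
    ∀ x : EuclideanSpace ℝ (Fin n),
      HasFDerivAt φ
        (((α - ‖φ x - c‖ ^ 2) / (α - ‖φ x - c‖ ^ 2 + 2 * γ * μ)) •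
          (ContinuousLinearMap.id ℝ (EuclideanSpace ℝ (Fin n)) -
            (2 / (α - 3 * ‖φ x - c‖ ^ 2 + 2 * γ * μ + 2 * ⟪φ x - c, x - c⟫_ℝ)) •
              (innerSL ℝ (φ x - c)).smulRight (x - φ x))) x := by
  intro x
  have hγμ : 0 < γ * μ := mul_pos hγ hμ
  have hball (y) : ‖φ y - c‖ ^ 2 < α := IsBallProx.norm_sub_sq_lt hα hγμ (hφ y)
  have hψ (y) : ballProxInv α (γ * μ) c (φ y) = y := IsBallProx.ballProxInv_eq hα hγμ (hφ y)
  have hleft : ∀ᶠ u in nhds (φ x), φ (ballProxInv α (γ * μ) c u) = u := by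
    filter_upwards [(isOpen_setOf_norm_sub_sq_lt α c).mem_nhds (hball x)] with u hu
    exact ballProxInv_injOn hγμ.le (hball _) hu (hψ _)
  have hderiv := ((hasStrictFDerivAt_ballProxInv hγμ.le (hball x)).to_local_left_inverse
    hleft).hasFDerivAt
  rw [hψ x, coe_ballProxInvDerivEquiv_symm hγμ.le (hball x) (hψ x)] at hderiv
  simpa only [mul_assoc] using hderiv
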